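/- arXiv:1210.2661 — 3 statements merged into one kernel-verified Lean document; each statement's English description precedes it below -/
import Mathlib

section
/- Let (A*, d) be a finite-dimensional DGA of PD-type with top degree n. Then the cohomology algebra H*(A) is a finite-dimensional graded commutative ℂ-algebra of PD-type with the same top degree n. In particular the pairing H^i(A) × H^{n-i}(A) → H^n(A) induced by multiplication is non-degenerate. -/
/-!
A class `[a] ∈ Hⁱ` that pairs trivially with `H^{n-i}` is exact. Fix a functional `f` that is
nonzero on `Aⁿ = ℂ v`; then `(x, y) ↦ f (x * y)` is a perfect pairing `Aⁱ × A^{n-i} → ℂ`.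
Since `d` vanishes on `A^{n-1}`, Leibniz gives `f (d c * b) = ± f (c * d b)`, so by
nondegeneracy in degree `n - i + 1` the closed elements of `A^{n-i}` are exactly the orthogonal
of `d A^{i-1}`. A class pairing trivially with them lies in the double orthogonal of `d A^{i-1}`,
which in finite dimension is `d A^{i-1}` itself.
-/

open Module

theorem mem_of_injective_of_forall_apply_eq_zero {K E F : Type*} [Field K]
    [AddCommGroup E] [Module K E] [AddCommGroup F] [Module K F] [FiniteDimensional K F]
    {β : E →ₗ[K] Dual K F} (hβ : Function.Injective β) (B : Submodule K E) {a : E}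
    (ha : ∀ y, (∀ x ∈ B, β x y = 0) → β a y = 0) : a ∈ B := by
  have hβa : β a ∈ (B.map β).dualCoannihilator.dualAnnihilator := by
    refine (Submodule.mem_dualAnnihilator _).mpr fun y hy ↦ ha y fun x hx ↦ ?_
    exact (Submodule.mem_dualCoannihilator y).mp hy _ (Submodule.mem_map_of_mem hx)
  rw [Subspace.dualCoannihilator_dualAnnihilator_eq] at hβa
  obtain ⟨x, hx, hxa⟩ := hβa
  exact hβ hxa ▸ hx

theorem exists_dual_apply_ne_zero_of_mem_span_singleton {K V : Type*} [Field K]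
    [AddCommGroup V] [Module K V] {v : V} (hv : v ≠ 0) :
    ∃ f : Dual K V, ∀ x ∈ K ∙ v, x ≠ 0 → f x ≠ 0 := by
  obtain ⟨f, hfv⟩ := Projective.exists_dual_ne_zero K hv
  refine ⟨f, fun x hx hx0 ↦ ?_⟩
  obtain ⟨c, rfl⟩ := Submodule.mem_span_singleton.mp hx
  have hc : c ≠ 0 := by rintro rfl; simp at hx0
  simpa [map_smul] using And.intro hc hfv

section PoincareDuality

variable {K V : Type*} [Field K] [CommRing V] [Algebra K V]

def gradedPairing (𝒜 : ℤ → Submodule K V) (f : Dual K V) (i j : ℤ) :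
    𝒜 i →ₗ[K] Dual K (𝒜 j) :=
  ((LinearMap.mul K V).compl₁₂ (𝒜 i).subtype (𝒜 j).subtype).compr₂ f

@[simp]
theorem gradedPairing_apply {𝒜 : ℤ → Submodule K V} {f : Dual K V} (i j : ℤ) (x : 𝒜 i)
    (y : 𝒜 j) :
    gradedPairing 𝒜 f i j x y = f (x * y) :=
  rfl

variable {𝒜 : ℤ → Submodule K V} [SetLike.GradedMonoid 𝒜] {n : ℤ} {f : Dual K V}
  {d : V →ₗ[K] V}

theorem mul_mem_graded_of_add_eq {p q r : ℤ} (h : p + q = r) {x y : V} (hx : x ∈ 𝒜 p)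
    (hy : y ∈ 𝒜 q) : x * y ∈ 𝒜 r :=
  h ▸ SetLike.mul_mem_graded hx hy

theorem eq_zero_of_forall_apply_mul_eq_zero (hf : ∀ x ∈ 𝒜 n, x ≠ 0 → f x ≠ 0)
    (hnondeg : ∀ i : ℤ, 0 < i → i < n → ∀ a ∈ 𝒜 i, (∀ b ∈ 𝒜 (n - i), a * b = 0) → a = 0)
    {i : ℤ} (hi : 0 < i) (hin : i ≤ n) {a : V} (ha : a ∈ 𝒜 i)
    (h : ∀ b ∈ 𝒜 (n - i), f (a * b) = 0) : a = 0 := by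
  have hmul : ∀ b ∈ 𝒜 (n - i), a * b = 0 := fun b hb ↦ by
    by_contra hab
    exact hf _ (mul_mem_graded_of_add_eq (by ring) ha hb) hab (h b hb)
  rcases hin.lt_or_eq with hin | rfl
  · exact hnondeg i hi hin a ha hmul
  · simpa using hmul 1 (by simpa using SetLike.GradedOne.one_mem (A := 𝒜))

theorem gradedPairing_injective (hf : ∀ x ∈ 𝒜 n, x ≠ 0 → f x ≠ 0)
    (hnondeg : ∀ i : ℤ, 0 < i → i < n → ∀ a ∈ 𝒜 i, (∀ b ∈ 𝒜 (n - i), a * b = 0) → a = 0)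
    {i : ℤ} (hi : 0 < i) (hin : i ≤ n) : Function.Injective (gradedPairing 𝒜 f i (n - i)) := by
  refine (injective_iff_map_eq_zero _).mpr fun a ha ↦ Subtype.ext ?_
  refine eq_zero_of_forall_apply_mul_eq_zero hf hnondeg hi hin a.2 fun b hb ↦ ?_
  simpa using LinearMap.congr_fun ha ⟨b, hb⟩

theorem d_mul_eq_neg_zpow_smul_mul_d
    (hleib : ∀ p : ℤ, ∀ a ∈ 𝒜 p, ∀ b, d (a * b) = d a * b + ((-1 : K) ^ p) • (a * d b))
    (hdtop : ∀ a ∈ 𝒜 (n - 1), d a = 0) {p q : ℤ} (hpq : p + q = n - 1) {c b : V}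
    (hc : c ∈ 𝒜 p) (hb : b ∈ 𝒜 q) : d c * b = -((-1 : K) ^ p • (c * d b)) := by
  have := hleib p c hc b
  rw [hdtop _ (mul_mem_graded_of_add_eq hpq hc hb)] at this
  exact eq_neg_of_add_eq_zero_left this.symm

theorem d_eq_zero_iff_forall_apply_d_mul_eq_zero (hf : ∀ x ∈ 𝒜 n, x ≠ 0 → f x ≠ 0)
    (hnondeg : ∀ i : ℤ, 0 < i → i < n → ∀ a ∈ 𝒜 i, (∀ b ∈ 𝒜 (n - i), a * b = 0) → a = 0)
    (hddeg : ∀ i : ℤ, ∀ a ∈ 𝒜 i, d a ∈ 𝒜 (i + 1))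
    (hleib : ∀ p : ℤ, ∀ a ∈ 𝒜 p, ∀ b, d (a * b) = d a * b + ((-1 : K) ^ p) • (a * d b))
    (hdtop : ∀ a ∈ 𝒜 (n - 1), d a = 0) {i : ℤ} (hi : 0 < i) (hin : i < n) {b : V}
    (hb : b ∈ 𝒜 (n - i)) : d b = 0 ↔ ∀ c ∈ 𝒜 (i - 1), f (d c * b) = 0 := by
  have parts : ∀ c ∈ 𝒜 (i - 1), d c * b = -((-1 : K) ^ (i - 1) • (c * d b)) :=
    fun c hc ↦ d_mul_eq_neg_zpow_smul_mul_d hleib hdtop (by ring) hc hb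
  refine ⟨fun hdb c hc ↦ by simp [parts c hc, hdb], fun h ↦ ?_⟩
  refine eq_zero_of_forall_apply_mul_eq_zero hf hnondeg (i := n - i + 1) (by omega) (by omega)
    (hddeg _ b hb) fun c hc ↦ ?_
  rw [show n - (n - i + 1) = i - 1 by ring] at hc
  have hfc := h c hc
  rw [parts c hc, map_neg, map_smul, neg_eq_zero, smul_eq_zero] at hfc
  rw [mul_comm]
  exact hfc.resolve_left (zpow_ne_zero _ (by norm_num))

theorem exists_eq_d_of_forall_mul_eq_d
    (hf : ∀ x ∈ 𝒜 n, x ≠ 0 → f x ≠ 0)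
    (hnondeg : ∀ i : ℤ, 0 < i → i < n → ∀ a ∈ 𝒜 i, (∀ b ∈ 𝒜 (n - i), a * b = 0) → a = 0)
    (hddeg : ∀ i : ℤ, ∀ a ∈ 𝒜 i, d a ∈ 𝒜 (i + 1))
    (hleib : ∀ p : ℤ, ∀ a ∈ 𝒜 p, ∀ b, d (a * b) = d a * b + ((-1 : K) ^ p) • (a * d b))
    (hdtop : ∀ a ∈ 𝒜 (n - 1), d a = 0) [FiniteDimensional K V] {i : ℤ} (hi : 0 < i)
    (hin : i < n) {a : V} (ha : a ∈ 𝒜 i)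
    (hann : ∀ b ∈ 𝒜 (n - i), d b = 0 → ∃ c ∈ 𝒜 (n - 1), a * b = d c) :
    ∃ c ∈ 𝒜 (i - 1), a = d c := by
  have hdi : ∀ c ∈ 𝒜 (i - 1), d c ∈ 𝒜 i := fun c hc ↦ by simpa using hddeg _ c hc
  suffices (⟨a, ha⟩ : 𝒜 i) ∈ LinearMap.range (d.restrict hdi) by
    obtain ⟨c, hc⟩ := this
    exact ⟨c, c.2, congr_arg Subtype.val hc.symm⟩
  refine mem_of_injective_of_forall_apply_eq_zero
    (gradedPairing_injective hf hnondeg hi hin.le) _ fun b hb ↦ ?_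
  have hdb : d b = 0 := by
    refine (d_eq_zero_iff_forall_apply_d_mul_eq_zero hf hnondeg hddeg hleib hdtop hi hin
      b.2).mpr fun c hc ↦ ?_
    simpa using hb _ (LinearMap.mem_range_self (d.restrict hdi) ⟨c, hc⟩)
  obtain ⟨c, hc, hac⟩ := hann b b.2 hdb
  simp [hac, hdtop c hc]

end PoincareDuality

theorem cohomology_of_pd_dga_is_pd_general
    {V : Type} [CommRing V] [Algebra ℂ V] [FiniteDimensional ℂ V]
    (𝒜 : ℤ → Submodule ℂ V) [GradedAlgebra 𝒜]
    (n : ℕ)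
    (v : V) (hv : v ≠ 0) (hvtop : 𝒜 (n : ℤ) = Submodule.span ℂ {v})
    (hnondeg : ∀ i : ℤ, 0 < i → i < (n : ℤ) →
      ∀ a ∈ 𝒜 i, (∀ b ∈ 𝒜 ((n : ℤ) - i), a * b = 0) → a = 0)
    (d : V →ₗ[ℂ] V)
    (hddeg : ∀ i : ℤ, ∀ a ∈ 𝒜 i, d a ∈ 𝒜 (i + 1))
    (hleib : ∀ (p : ℤ), ∀ a ∈ 𝒜 p, ∀ b, d (a * b) = d a * b + ((-1 : ℂ) ^ p) • (a * d b))
    (hdtop : ∀ a ∈ 𝒜 ((n : ℤ) - 1), d a = 0) :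
    -- (i) `Hⁿ(A)` is non-zero: the top class `v` is not exact
    (¬ ∃ c ∈ 𝒜 ((n : ℤ) - 1), v = d c) ∧
    -- (ii) `Hⁿ(A)` is one-dimensional, spanned by the class of `v`
    (∀ w ∈ 𝒜 (n : ℤ), d w = 0 → ∃ (c : ℂ), ∃ e ∈ 𝒜 ((n : ℤ) - 1), w = c • v + d e) ∧
    -- (iii) the induced pairing `Hⁱ(A) × H^{n-i}(A) → Hⁿ(A)` is non-degenerate
    (∀ i : ℤ, 0 < i → i < (n : ℤ) → ∀ a ∈ 𝒜 i, d a = 0 →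
      (∀ b ∈ 𝒜 ((n : ℤ) - i), d b = 0 → ∃ c ∈ 𝒜 ((n : ℤ) - 1), a * b = d c) →
      ∃ c ∈ 𝒜 (i - 1), a = d c) := by
  obtain ⟨f, hf⟩ := exists_dual_apply_ne_zero_of_mem_span_singleton (K := ℂ) hv
  rw [← hvtop] at hf
  refine ⟨?_, fun w hw _ ↦ ?_, fun i hi hin a ha _ hann ↦ ?_⟩
  · rintro ⟨c, hc, rfl⟩
    exact hv (hdtop c hc)
  · obtain ⟨c, rfl⟩ := Submodule.mem_span_singleton.mp (hvtop ▸ hw)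
    exact ⟨c, 0, zero_mem _, by simp⟩
  · exact exists_eq_d_of_forall_mul_eq_d hf hnondeg hddeg hleib hdtop hi hin ha hann

/-- The cohomology algebra of a finite-dimensional DGA of PD-type
with top degree `n` is again a finite-dimensional graded commutative algebra of
PD-type with the same top degree `n`: the top cohomology `Hⁿ` is one-dimensional,
spanned by the (non-exact) class of `v`, and the pairing
`Hⁱ × H^{n-i} → Hⁿ` induced by multiplication is non-degenerate. -/
theorem cohomology_of_pd_dga_is_pd
    {V : Type} [CommRing V] [Algebra ℂ V] [FiniteDimensional ℂ V]
    (𝒜 : ℤ → Submodule ℂ V) [GradedAlgebra 𝒜]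
    (gradedComm : ∀ (p q : ℤ), ∀ a ∈ 𝒜 p, ∀ b ∈ 𝒜 q, a * b = ((-1 : ℂ) ^ (p * q)) • (b * a))
    (n : ℕ) (hn : 1 ≤ n)
    (hneg : ∀ i : ℤ, i < 0 → 𝒜 i = ⊥)
    (htop : ∀ i : ℤ, (n : ℤ) < i → 𝒜 i = ⊥)
    (hzero : 𝒜 0 = Submodule.span ℂ {(1 : V)})
    (v : V) (hv : v ≠ 0) (hvtop : 𝒜 (n : ℤ) = Submodule.span ℂ {v})
    (hnondeg : ∀ i : ℤ, 0 < i → i < (n : ℤ) →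
      ∀ a ∈ 𝒜 i, (∀ b ∈ 𝒜 ((n : ℤ) - i), a * b = 0) → a = 0)
    (d : V →ₗ[ℂ] V)
    (hddeg : ∀ i : ℤ, ∀ a ∈ 𝒜 i, d a ∈ 𝒜 (i + 1))
    (hdd : ∀ x, d (d x) = 0)
    (hleib : ∀ (p : ℤ), ∀ a ∈ 𝒜 p, ∀ b, d (a * b) = d a * b + ((-1 : ℂ) ^ p) • (a * d b))
    (hdtop : ∀ a ∈ 𝒜 ((n : ℤ) - 1), d a = 0)
    (hdzero : ∀ a ∈ 𝒜 0, d a = 0) :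
    -- (i) `Hⁿ(A)` is non-zero: the top class `v` is not exact
    (¬ ∃ c ∈ 𝒜 ((n : ℤ) - 1), v = d c) ∧
    -- (ii) `Hⁿ(A)` is one-dimensional, spanned by the class of `v`
    (∀ w ∈ 𝒜 (n : ℤ), d w = 0 → ∃ (c : ℂ), ∃ e ∈ 𝒜 ((n : ℤ) - 1), w = c • v + d e) ∧
    -- (iii) the induced pairing `Hⁱ(A) × H^{n-i}(A) → Hⁿ(A)` is non-degenerate
    (∀ i : ℤ, 0 < i → i < (n : ℤ) → ∀ a ∈ 𝒜 i, d a = 0 →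
      (∀ b ∈ 𝒜 ((n : ℤ) - i), d b = 0 → ∃ c ∈ 𝒜 ((n : ℤ) - 1), a * b = d c) →
      ∃ c ∈ 𝒜 (i - 1), a = d c) :=
  cohomology_of_pd_dga_is_pd_general 𝒜 n v hv hvtop hnondeg d hddeg hleib hdtop
end

section
/- Let (A*, d) be a finite-dimensional DGA of PD-type and B* ⊆ A* a sub-DGA that is itself of PD-type (with the same top degree and a Hermitian metric restricted from A such that the harmonic theory on B is compatible, i.e. ℋ*(B) ⊆ ℋ*(A)). Then the inclusion B* ⊆ A* induces an injection H*(B) ↪ H*(A) on cohomology. -/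
/-- The formal adjoint `d* = -⋆̄ ∘ d ∘ ⋆̄` built from a differential `d` and an
antilinear Hodge star operator `s`. -/
noncomputable def dstarOp {V : Type} [CommRing V] [Algebra ℂ V]
    (d : V →ₗ[ℂ] V) (s : V → V) : V → V :=
  fun x => - s (d (s x))

/-- The Laplacian `Δ = d d* + d* d`. -/
noncomputable def lapOp {V : Type} [CommRing V] [Algebra ℂ V]
    (d : V →ₗ[ℂ] V) (s : V → V) : V → V :=
  fun x => d (dstarOp d s x) + dstarOp d s (d x)

/-!
Project a cocycle `b ∈ Bᵖ` orthogonally off the coboundaries `d(Bᵖ⁻¹)`: the remainder `β = b - dc`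
is closed and orthogonal to `d(Bᵖ⁻¹)`, hence co-closed for the Hodge star of `B` (Stokes' formula
plus the Hodge pairing), i.e. `β ∈ ℋᵖ(B) ⊆ ℋᵖ(A)`. If `b` is exact in `A`, so is `β`; an exact
harmonic element pairs to zero with itself by Stokes' formula, so `β = 0` and `b = dc`.
-/

theorem eq_zero_of_hermitian_self_eq_zero {V : Type*} [Zero V] {h : V → V → ℂ}
    (hpos : ∀ x, x ≠ 0 → 0 < (h x x).re)
    {x : V} (hx : h x x = 0) : x = 0 := by
  by_contra hne
  simpa [hx] using hpos x hne

section Hermitian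

variable {V : Type*} [AddCommGroup V] [Module ℂ V]

/-- Mathlib's inner product is conjugate-linear in its first argument, so `⟪x, y⟫ = h y x`. -/
noncomputable abbrev hermitianInnerCore (h : V → V → ℂ) (haddl : ∀ x y z, h (x + y) z = h x z + h y z)
    (hsmull : ∀ (c : ℂ) (x y : V), h (c • x) y = c * h x y)
    (hconj : ∀ x y, h y x = (starRingEnd ℂ) (h x y))
    (hpos : ∀ x, x ≠ 0 → 0 < (h x x).re) : InnerProductSpace.Core ℂ V where
  inner x y := h y x
  conj_inner_symm x y := (hconj x y).symm
  re_inner_nonneg x := by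
    rcases eq_or_ne x 0 with rfl | hx
    · simp [show h 0 0 = 0 by simpa using haddl 0 0 0]
    · exact (hpos x hx).le
  add_left x y z := by
    change h z (x + y) = h z x + h z y
    rw [hconj, haddl, map_add, ← hconj, ← hconj]
  smul_left x y r := by
    change h y (r • x) = (starRingEnd ℂ) r * h y x
    rw [hconj, hsmull, map_mul, ← hconj]
  definite _ := eq_zero_of_hermitian_self_eq_zero hpos

theorem exists_orthogonal_projection_of_hermitian [FiniteDimensional ℂ V] (h : V → V → ℂ)
    (haddl : ∀ x y z, h (x + y) z = h x z + h y z)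
    (hsmull : ∀ (c : ℂ) (x y : V), h (c • x) y = c * h x y)
    (hconj : ∀ x y, h y x = (starRingEnd ℂ) (h x y))
    (hpos : ∀ x, x ≠ 0 → 0 < (h x x).re) (D : Submodule ℂ V) (b : V) :
    ∃ u ∈ D, ∀ w ∈ D, h w (b - u) = 0 := by
  let core := hermitianInnerCore h haddl hsmull hconj hpos
  let _ : NormedAddCommGroup V := core.toNormedAddCommGroup
  let _ : InnerProductSpace ℂ V := InnerProductSpace.ofCore core.toCore
  exact ⟨D.starProjection b, D.starProjection_apply_mem b,
    (Submodule.mem_orthogonal' D _).mp (D.sub_starProjection_mem_orthogonal b)⟩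

end Hermitian

theorem map_zero_of_antilinear {V : Type*} [AddCommGroup V] [Module ℂ V] {t : V → V}
    (htsmul : ∀ (c : ℂ) (x : V), t (c • x) = (starRingEnd ℂ) c • t x) : t 0 = 0 := by
  simpa using htsmul 0 0

theorem lapOp_of_d_eq_zero {V : Type} [CommRing V] [Algebra ℂ V] {d : V →ₗ[ℂ] V} {t : V → V}
    (ht0 : t 0 = 0) {x : V} (hx : d x = 0) : lapOp d t x = -d (t (d (t x))) := by
  simp [lapOp, dstarOp, hx, ht0]

section Stokes

variable {V : Type} [CommRing V] [Algebra ℂ V] {𝒜 : ℤ → Submodule ℂ V} [SetLike.GradedMonoid 𝒜]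
  {d : V →ₗ[ℂ] V} {n : ℤ} {h : V → V → ℂ}

theorem d_mul_eq_zero_of_mul_d_eq_zero
    (hleib : ∀ p, ∀ a ∈ 𝒜 p, ∀ b, d (a * b) = d a * b + ((-1 : ℂ) ^ p) • (a * d b))
    (hdtop : ∀ a ∈ 𝒜 (n - 1), d a = 0) {j k : ℤ} (hjk : j + k = n - 1) {a b : V}
    (ha : a ∈ 𝒜 j) (hb : b ∈ 𝒜 k) (hab : a * d b = 0) : d a * b = 0 := by
  have hstokes := hleib j a ha b
  rw [hdtop _ (hjk ▸ SetLike.mul_mem_graded ha hb), hab, smul_zero, add_zero] at hstokes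
  exact hstokes.symm

theorem eq_zero_of_mul_eq_zero_of_pairing (hpos : ∀ x, x ≠ 0 → 0 < (h x x).re) {w x y : V}
    (hw : w ≠ 0) (hpair : x * y = h x x • w) (hxy : x * y = 0) : x = 0 :=
  eq_zero_of_hermitian_self_eq_zero hpos <|
    (smul_eq_zero.mp (hpair.symm.trans hxy)).resolve_right hw

theorem d_eq_zero_of_mul_d_star_eq_zero
    (hleib : ∀ p, ∀ a ∈ 𝒜 p, ∀ b, d (a * b) = d a * b + ((-1 : ℂ) ^ p) • (a * d b))
    (hdtop : ∀ a ∈ 𝒜 (n - 1), d a = 0) (hpos : ∀ x, x ≠ 0 → 0 < (h x x).re)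
    {t : V → V} {w : V} (hw : w ≠ 0) {j k : ℤ} (hjk : j + k = n - 1) {σ : V} (hσ : σ ∈ 𝒜 j)
    (ht : t (d σ) ∈ 𝒜 k) (hpair : d σ * t (d σ) = h (d σ) (d σ) • w)
    (hvanish : σ * d (t (d σ)) = 0) : d σ = 0 :=
  eq_zero_of_mul_eq_zero_of_pairing hpos hw hpair
    (d_mul_eq_zero_of_mul_d_eq_zero hleib hdtop hjk hσ ht hvanish)

theorem d_star_eq_zero_of_orthogonal_to_exact (B : Subalgebra ℂ V) (hBd : ∀ x ∈ B, d x ∈ B)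
    (hddeg : ∀ i : ℤ, ∀ a ∈ 𝒜 i, d a ∈ 𝒜 (i + 1))
    (hleib : ∀ p, ∀ a ∈ 𝒜 p, ∀ b, d (a * b) = d a * b + ((-1 : ℂ) ^ p) • (a * d b))
    (hdtop : ∀ a ∈ 𝒜 (n - 1), d a = 0) (hpos : ∀ x, x ≠ 0 → 0 < (h x x).re)
    {t : V → V} {w : V} (hw : w ≠ 0)
    (htdeg : ∀ i : ℤ, ∀ a ∈ 𝒜 i, a ∈ B → t a ∈ 𝒜 (n - i) ∧ t a ∈ B)
    (htdef : ∀ i : ℤ, ∀ α ∈ 𝒜 i, α ∈ B → ∀ β ∈ 𝒜 i, β ∈ B → α * t β = h α β • w)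
    {p : ℤ} {β : V} (hβ : β ∈ 𝒜 p) (hβB : β ∈ B)
    (horth : ∀ c ∈ 𝒜 (p - 1), c ∈ B → h (d c) β = 0) : d (t β) = 0 := by
  obtain ⟨hσ, hσB⟩ := htdeg p β hβ hβB
  have hη := hddeg _ _ hσ
  have hηB := hBd _ hσB
  obtain ⟨hτ, hτB⟩ := htdeg _ _ hη hηB
  have hτ' : t (d (t β)) ∈ 𝒜 (p - 1) := by convert hτ using 2; ring
  have hdτ : d (t (d (t β))) ∈ 𝒜 p := by simpa using hddeg _ _ hτ'
  refine d_eq_zero_of_mul_d_star_eq_zero hleib hdtop hpos hw (by ring) hσ hτ'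
    (htdef _ _ hη hηB _ hη hηB) ?_
  rw [mul_comm, htdef p _ hdτ (hBd _ hτB) β hβ hβB, horth _ hτ' hτB, zero_smul]

theorem d_eq_zero_of_lapOp_d_eq_zero
    (hddeg : ∀ i : ℤ, ∀ a ∈ 𝒜 i, d a ∈ 𝒜 (i + 1)) (hdd : ∀ x, d (d x) = 0)
    (hleib : ∀ p, ∀ a ∈ 𝒜 p, ∀ b, d (a * b) = d a * b + ((-1 : ℂ) ^ p) • (a * d b))
    (hdtop : ∀ a ∈ 𝒜 (n - 1), d a = 0) (hpos : ∀ x, x ≠ 0 → 0 < (h x x).re)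
    {s : V → V} {v : V} (hv : v ≠ 0) (hs0 : s 0 = 0)
    (hsdeg : ∀ i : ℤ, ∀ a ∈ 𝒜 i, s a ∈ 𝒜 (n - i))
    (hsdef : ∀ i : ℤ, ∀ α ∈ 𝒜 i, ∀ β ∈ 𝒜 i, α * s β = h α β • v)
    {p : ℤ} {α : V} (hα : α ∈ 𝒜 (p - 1)) (hlap : lapOp d s (d α) = 0) : d α = 0 := by
  have hβ : d α ∈ 𝒜 p := by simpa using hddeg _ _ hα
  have hσ := hsdeg p _ hβ
  have hη := hddeg _ _ hσ
  have hdsds : d (s (d (s (d α)))) = 0 := by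
    simpa [lapOp_of_d_eq_zero hs0 (hdd α)] using hlap
  have hcoclosed : d (s (d α)) = 0 :=
    d_eq_zero_of_mul_d_star_eq_zero hleib hdtop hpos hv (by ring) hσ (hsdeg _ _ hη)
      (hsdef _ _ hη _ hη) (by rw [hdsds, mul_zero])
  exact d_eq_zero_of_mul_d_star_eq_zero hleib hdtop hpos hv (by ring) hα hσ
    (hsdef _ _ hβ _ hβ) (by rw [hcoclosed, mul_zero])

end Stokes

theorem subdga_injects_on_cohomology_general
    {V : Type} [CommRing V] [Algebra ℂ V] [FiniteDimensional ℂ V]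
    (𝒜 : ℤ → Submodule ℂ V) [GradedAlgebra 𝒜]
    (n : ℕ)
    (v : V) (hv : v ≠ 0)
    -- a Hermitian metric compatible with the grading
    (h : V → V → ℂ)
    (haddl : ∀ x y z, h (x + y) z = h x z + h y z)
    (hsmull : ∀ (c : ℂ) (x y : V), h (c • x) y = c * h x y)
    (hconj : ∀ x y, h y x = (starRingEnd ℂ) (h x y))
    (hpos : ∀ x, x ≠ 0 → 0 < (h x x).re)
    -- the differential, making (A*, d) a finite-dimensional DGA of PD-type
    (d : V →ₗ[ℂ] V)
    (hddeg : ∀ i : ℤ, ∀ a ∈ 𝒜 i, d a ∈ 𝒜 (i + 1))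
    (hdd : ∀ x, d (d x) = 0)
    (hleib : ∀ (p : ℤ), ∀ a ∈ 𝒜 p, ∀ b, d (a * b) = d a * b + ((-1 : ℂ) ^ p) • (a * d b))
    (hdtop : ∀ a ∈ 𝒜 ((n : ℤ) - 1), d a = 0)
    -- the antilinear Hodge star operator
    (s : V → V)
    (hssmul : ∀ (c : ℂ) (x : V), s (c • x) = (starRingEnd ℂ) c • s x)
    (hsdeg : ∀ i : ℤ, ∀ a ∈ 𝒜 i, s a ∈ 𝒜 ((n : ℤ) - i))
    (hsdef : ∀ i : ℤ, ∀ α ∈ 𝒜 i, ∀ β ∈ 𝒜 i, α * s β = h α β • v)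
    -- `B` is a graded sub-DGA of `A`
    (B : Subalgebra ℂ V)
    (hBd : ∀ x ∈ B, d x ∈ B)
    -- `B` is itself of PD-type with the same top degree `n`
    (vB : V) (hvB : vB ≠ 0)
    -- the Hodge star operator of `B` for the restricted metric, and the
    -- compatibility of the harmonic theories: `ℋ*(B) ⊆ ℋ*(A)`
    (sB : V → V)
    (hsBsmul : ∀ (c : ℂ) (x : V), sB (c • x) = (starRingEnd ℂ) c • sB x)
    (hsBdeg : ∀ i : ℤ, ∀ a ∈ 𝒜 i, a ∈ B → sB a ∈ 𝒜 ((n : ℤ) - i) ∧ sB a ∈ B)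
    (hsBdef : ∀ i : ℤ, ∀ α ∈ 𝒜 i, α ∈ B → ∀ β ∈ 𝒜 i, β ∈ B → α * sB β = h α β • vB)
    (hharm : ∀ x ∈ B, lapOp d sB x = 0 → lapOp d s x = 0) :
    -- conclusion: the inclusion `B ⊆ A` induces an injection `H*(B) ↪ H*(A)`
    ∀ p : ℤ, ∀ b ∈ 𝒜 p, b ∈ B → d b = 0 →
      (∃ a ∈ 𝒜 (p - 1), b = d a) →
      ∃ c ∈ 𝒜 (p - 1), c ∈ B ∧ b = d c := by
  rintro p b hbA hbB hdb ⟨a, haA, rfl⟩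
  obtain ⟨_, ⟨c, ⟨hcB, hcA⟩, rfl⟩, horth⟩ :=
    exists_orthogonal_projection_of_hermitian h haddl hsmull hconj hpos
      ((Subalgebra.toSubmodule B ⊓ 𝒜 (p - 1)).map d) (d a)
  have hβA : d (a - c) ∈ 𝒜 p := by simpa using hddeg _ _ (sub_mem haA hcA)
  have hβB : d (a - c) ∈ B := by rw [map_sub]; exact sub_mem hbB (hBd c hcB)
  have hclosed : d (d (a - c)) = 0 := hdd _
  have hcoclosedB : d (sB (d (a - c))) = 0 :=
    d_star_eq_zero_of_orthogonal_to_exact B hBd hddeg hleib hdtop hpos hvB hsBdeg hsBdef hβA hβB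
      fun c' hc'A hc'B => by simpa using horth _ ⟨c', ⟨hc'B, hc'A⟩, rfl⟩
  have hharmB : lapOp d sB (d (a - c)) = 0 := by
    rw [lapOp_of_d_eq_zero (map_zero_of_antilinear hsBsmul) hclosed, hcoclosedB,
      map_zero_of_antilinear hsBsmul, map_zero, neg_zero]
  have hexact : d (a - c) = 0 :=
    d_eq_zero_of_lapOp_d_eq_zero hddeg hdd hleib hdtop hpos hv (map_zero_of_antilinear hssmul)
      hsdeg hsdef (sub_mem haA hcA) (hharm _ hβB hharmB)
  exact ⟨c, hcA, hcB, sub_eq_zero.mp (by rwa [map_sub] at hexact)⟩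

theorem subdga_injects_on_cohomology
    {V : Type} [CommRing V] [Algebra ℂ V] [FiniteDimensional ℂ V]
    (𝒜 : ℤ → Submodule ℂ V) [GradedAlgebra 𝒜]
    (gradedComm : ∀ (p q : ℤ), ∀ a ∈ 𝒜 p, ∀ b ∈ 𝒜 q, a * b = ((-1 : ℂ) ^ (p * q)) • (b * a))
    (n : ℕ) (hn : 1 ≤ n)
    (hneg : ∀ i : ℤ, i < 0 → 𝒜 i = ⊥)
    (htop : ∀ i : ℤ, (n : ℤ) < i → 𝒜 i = ⊥)
    (hzero : 𝒜 0 = Submodule.span ℂ {(1 : V)})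
    (v : V) (hv : v ≠ 0) (hvtop : 𝒜 (n : ℤ) = Submodule.span ℂ {v})
    (hnondeg : ∀ i : ℤ, 0 < i → i < (n : ℤ) →
      ∀ a ∈ 𝒜 i, (∀ b ∈ 𝒜 ((n : ℤ) - i), a * b = 0) → a = 0)
    -- a Hermitian metric compatible with the grading
    (h : V → V → ℂ)
    (haddl : ∀ x y z, h (x + y) z = h x z + h y z)
    (hsmull : ∀ (c : ℂ) (x y : V), h (c • x) y = c * h x y)
    (hconj : ∀ x y, h y x = (starRingEnd ℂ) (h x y))
    (hpos : ∀ x, x ≠ 0 → 0 < (h x x).re)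
    (hcompat : ∀ (i j : ℤ), i ≠ j → ∀ a ∈ 𝒜 i, ∀ b ∈ 𝒜 j, h a b = 0)
    (hvv : h v v = 1)
    -- the differential, making (A*, d) a finite-dimensional DGA of PD-type
    (d : V →ₗ[ℂ] V)
    (hddeg : ∀ i : ℤ, ∀ a ∈ 𝒜 i, d a ∈ 𝒜 (i + 1))
    (hdd : ∀ x, d (d x) = 0)
    (hleib : ∀ (p : ℤ), ∀ a ∈ 𝒜 p, ∀ b, d (a * b) = d a * b + ((-1 : ℂ) ^ p) • (a * d b))
    (hdtop : ∀ a ∈ 𝒜 ((n : ℤ) - 1), d a = 0)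
    (hdzero : ∀ a ∈ 𝒜 0, d a = 0)
    -- the antilinear Hodge star operator
    (s : V → V)
    (hsadd : ∀ x y, s (x + y) = s x + s y)
    (hssmul : ∀ (c : ℂ) (x : V), s (c • x) = (starRingEnd ℂ) c • s x)
    (hsdeg : ∀ i : ℤ, ∀ a ∈ 𝒜 i, s a ∈ 𝒜 ((n : ℤ) - i))
    (hsdef : ∀ i : ℤ, ∀ α ∈ 𝒜 i, ∀ β ∈ 𝒜 i, α * s β = h α β • v)
    -- `B` is a graded sub-DGA of `A`
    (B : Subalgebra ℂ V)
    (hBd : ∀ x ∈ B, d x ∈ B)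
    (hBgr : ∀ x ∈ B, ∀ i : ℤ, (DirectSum.decompose 𝒜 x i : V) ∈ B)
    -- `B` is itself of PD-type with the same top degree `n`
    (vB : V) (hvB : vB ≠ 0) (hvBtop : vB ∈ 𝒜 (n : ℤ)) (hvBmem : vB ∈ B)
    (hvBspan : ∀ w ∈ 𝒜 (n : ℤ), w ∈ B → ∃ c : ℂ, w = c • vB)
    (hBnondeg : ∀ i : ℤ, 0 < i → i < (n : ℤ) → ∀ a ∈ 𝒜 i, a ∈ B →
      (∀ b ∈ 𝒜 ((n : ℤ) - i), b ∈ B → a * b = 0) → a = 0)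
    (hvBnorm : h vB vB = 1)
    -- the Hodge star operator of `B` for the restricted metric, and the
    -- compatibility of the harmonic theories: `ℋ*(B) ⊆ ℋ*(A)`
    (sB : V → V)
    (hsBadd : ∀ x y, sB (x + y) = sB x + sB y)
    (hsBsmul : ∀ (c : ℂ) (x : V), sB (c • x) = (starRingEnd ℂ) c • sB x)
    (hsBdeg : ∀ i : ℤ, ∀ a ∈ 𝒜 i, a ∈ B → sB a ∈ 𝒜 ((n : ℤ) - i) ∧ sB a ∈ B)
    (hsBdef : ∀ i : ℤ, ∀ α ∈ 𝒜 i, α ∈ B → ∀ β ∈ 𝒜 i, β ∈ B → α * sB β = h α β • vB)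
    (hharm : ∀ x ∈ B, lapOp d sB x = 0 → lapOp d s x = 0) :
    -- conclusion: the inclusion `B ⊆ A` induces an injection `H*(B) ↪ H*(A)`
    ∀ p : ℤ, ∀ b ∈ 𝒜 p, b ∈ B → d b = 0 →
      (∃ a ∈ 𝒜 (p - 1), b = d a) →
      ∃ c ∈ 𝒜 (p - 1), c ∈ B ∧ b = d c :=
  subdga_injects_on_cohomology_general 𝒜 n v hv h haddl hsmull hconj hpos d hddeg hdd hleib hdtop s
    hssmul hsdeg hsdef B hBd vB hvB sB hsBsmul hsBdeg hsBdef hharm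
end

section
/- Let (A^{*,*}, ∂, ∂̄) be a finite-dimensional bidifferential bigraded algebra whose total complex (Tot A, ∂+∂̄) is a finite-dimensional DGA of PD-type, and let B^{*,*} ⊆ A^{*,*} be a sub-BBA with the same property (harmonic spaces compatible at every stage). Consider the spectral sequences E_r^{p,q}(A) and E_r^{p,q}(B) of the double complexes (filtering by the first degree). Then for every r ≥ 0: (a) the total complexes Tot E_r(A) and Tot E_r(B), with differential d_r, are finite-dimensional DGAs of PD-type; and (b) the inclusion B ⊆ A induces an injection E_r^{p,q}(B) ↪ E_r^{p,q}(A). -/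
/-- A graded `ℂ`-algebra `V` with grading `𝒜`, top degree `n` and differential
`d` is a DGA of Poincaré duality type. -/
def IsPDTypeDGA {V : Type} [CommRing V] [Algebra ℂ V]
    (𝒜 : ℤ → Submodule ℂ V) (n : ℕ) (d : V →ₗ[ℂ] V) : Prop :=
  (∀ i : ℤ, i < 0 → 𝒜 i = ⊥) ∧
  (∀ i : ℤ, (n : ℤ) < i → 𝒜 i = ⊥) ∧
  (𝒜 0 = Submodule.span ℂ {(1 : V)}) ∧
  (∃ v : V, v ≠ 0 ∧ 𝒜 (n : ℤ) = Submodule.span ℂ {v}) ∧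
  (∀ i : ℤ, 0 < i → i < (n : ℤ) →
    ∀ a ∈ 𝒜 i, (∀ b ∈ 𝒜 ((n : ℤ) - i), a * b = 0) → a = 0) ∧
  (∀ a ∈ 𝒜 ((n : ℤ) - 1), d a = 0) ∧
  (∀ a ∈ 𝒜 0, d a = 0)

/-- The harmonic theories of `(W, dW)` and `(V, dV)` are compatible along
`f : W →ₗ V`: there are compatible Hermitian metrics and Hodge star operators on
both sides such that `f` maps harmonic elements to harmonic elements,
`ℋ*(W) ⊆ ℋ*(V)`. -/
def HarmonicCompatible {W V : Type} [CommRing W] [Algebra ℂ W]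
    [CommRing V] [Algebra ℂ V]
    (grW : ℤ → Submodule ℂ W) (grV : ℤ → Submodule ℂ V) (n : ℕ)
    (dW : W →ₗ[ℂ] W) (dV : V →ₗ[ℂ] V) (f : W →ₗ[ℂ] V) : Prop :=
  ∃ (hV : V → V → ℂ) (sV : V → V) (vV : V) (hW : W → W → ℂ) (sW : W → W) (vW : W),
    (∀ x y z, hV (x + y) z = hV x z + hV y z) ∧
    (∀ (c : ℂ) (x y : V), hV (c • x) y = c * hV x y) ∧
    (∀ x y, hV y x = (starRingEnd ℂ) (hV x y)) ∧
    (∀ x, x ≠ 0 → 0 < (hV x x).re) ∧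
    (∀ i j : ℤ, i ≠ j → ∀ a ∈ grV i, ∀ b ∈ grV j, hV a b = 0) ∧
    vV ∈ grV (n : ℤ) ∧ hV vV vV = 1 ∧
    (∀ x y, sV (x + y) = sV x + sV y) ∧
    (∀ (c : ℂ) (x : V), sV (c • x) = (starRingEnd ℂ) c • sV x) ∧
    (∀ i : ℤ, ∀ a ∈ grV i, sV a ∈ grV ((n : ℤ) - i)) ∧
    (∀ i : ℤ, ∀ α ∈ grV i, ∀ β ∈ grV i, α * sV β = hV α β • vV) ∧
    (∀ x y z, hW (x + y) z = hW x z + hW y z) ∧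
    (∀ (c : ℂ) (x y : W), hW (c • x) y = c * hW x y) ∧
    (∀ x y, hW y x = (starRingEnd ℂ) (hW x y)) ∧
    (∀ x, x ≠ 0 → 0 < (hW x x).re) ∧
    (∀ i j : ℤ, i ≠ j → ∀ a ∈ grW i, ∀ b ∈ grW j, hW a b = 0) ∧
    vW ∈ grW (n : ℤ) ∧ hW vW vW = 1 ∧
    (∀ x y, sW (x + y) = sW x + sW y) ∧
    (∀ (c : ℂ) (x : W), sW (c • x) = (starRingEnd ℂ) c • sW x) ∧
    (∀ i : ℤ, ∀ a ∈ grW i, sW a ∈ grW ((n : ℤ) - i)) ∧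
    (∀ i : ℤ, ∀ α ∈ grW i, ∀ β ∈ grW i, α * sW β = hW α β • vW) ∧
    (∀ x : W, lapOp dW sW x = 0 → lapOp dV sV (f x) = 0)

/-!
Induction on `r`. On a finite-dimensional PD-type DGA, the coefficient `∫` (`topForm`) of the
top class makes `(x, y) ↦ ∫ x y` a nondegenerate symmetric form, and since `d` vanishes in
degree `n - 1` we get Stokes' formula `∫ d = 0`, so `d` is skew-adjoint up to sign. Hence
`(ker d)ᗮ = im d`: a homogeneous element pairing to zero with every closed element of
complementary degree is exact. This is Poincaré duality for the cohomology page, and it also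
gives injectivity of `E_{r+1}(B) → E_{r+1}(A)`: if `f x = d w`, then `f (x z) = d (w f z) = 0`
for closed `z`. The remaining condition, that `d_{r+1}` kills degree `n - 1`, holds because
otherwise it would hit the one-dimensional top degree of `E_{r+1}` and kill the top degree of
`E_{r+2}`, which the harmonic top class keeps alive.
-/

open DirectSum

section HomogeneousMaps

variable {ι R M N : Type*} [DecidableEq ι] [CommRing R]
  [AddCommGroup M] [Module R M] [AddCommGroup N] [Module R N]
  {𝒜 : ι → Submodule R M} {ℬ : ι → Submodule R N} [Decomposition 𝒜] [Decomposition ℬ]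

theorem coe_decompose_map_add [AddRightCancelMonoid ι] {φ : M →ₗ[R] N} {k : ι}
    (hφ : ∀ i, ∀ x ∈ 𝒜 i, φ x ∈ ℬ (i + k)) (x : M) (i : ι) :
    (decompose ℬ (φ x) (i + k) : N) = φ (decompose 𝒜 x i) := by
  induction x using Decomposition.inductionOn 𝒜 with
  | zero => simp
  | @homogeneous j m =>
    obtain ⟨m, hm⟩ := m
    by_cases hji : j = i
    · subst hji
      rw [decompose_of_mem_same ℬ (hφ j m hm), decompose_of_mem_same 𝒜 hm]
    · rw [decompose_of_mem_ne ℬ (hφ j m hm) (fun h => hji (add_right_cancel h)),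
        decompose_of_mem_ne 𝒜 hm hji, map_zero]
  | add x y hx hy =>
    rw [map_add, decompose_add, decompose_add, DirectSum.add_apply, DirectSum.add_apply,
      Submodule.coe_add, Submodule.coe_add, hx, hy, map_add]

theorem exists_mem_eq_map_of_mem_add [AddRightCancelMonoid ι] {φ : M →ₗ[R] N} {k : ι}
    (hφ : ∀ i, ∀ x ∈ 𝒜 i, φ x ∈ ℬ (i + k)) {i : ι} {x : N} (hx : x ∈ ℬ (i + k))
    {y : M} (hxy : x = φ y) : ∃ w ∈ 𝒜 i, x = φ w :=
  ⟨decompose 𝒜 y i, (decompose 𝒜 y i).2, by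
    rw [← coe_decompose_map_add hφ, ← hxy, decompose_of_mem_same ℬ hx]⟩

theorem injective_of_forall_mem_map_eq_zero [AddRightCancelMonoid ι] {φ : M →ₗ[R] N}
    (hφ : ∀ i, ∀ x ∈ 𝒜 i, φ x ∈ ℬ i) (hinj : ∀ i, ∀ x ∈ 𝒜 i, φ x = 0 → x = 0) :
    Function.Injective φ := by
  refine (injective_iff_map_eq_zero φ).2 fun x hx => (decompose 𝒜).injective ?_
  ext i : 2
  rw [decompose_zero, DirectSum.zero_apply, ZeroMemClass.coe_zero]
  refine hinj i _ (decompose 𝒜 x i).2 ?_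
  refine (coe_decompose_map_add (k := 0) (by simpa using hφ) x i).symm.trans ?_
  rw [hx, decompose_zero, DirectSum.zero_apply, ZeroMemClass.coe_zero]

theorem LinearMap.eq_zero_of_forall_mem {L : M →ₗ[R] N} (h : ∀ i, ∀ x ∈ 𝒜 i, L x = 0) :
    L = 0 :=
  decompose_lhom_ext 𝒜 fun i => LinearMap.ext fun x => h i x x.2

end HomogeneousMaps

section PDType

variable {V : Type} [CommRing V] [Algebra ℂ V] {gr : ℤ → Submodule ℂ V} {n : ℕ}
  {d : V →ₗ[ℂ] V}

variable (gr d) in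
def IsGradedDerivation : Prop :=
  ∀ (p : ℤ), ∀ x ∈ gr p, ∀ y, d (x * y) = d x * y + ((-1 : ℂ) ^ p) • (x * d y)

theorem d_mul_of_d_eq_zero (hleib : IsGradedDerivation gr d) {p : ℤ} {x y : V} (hx : x ∈ gr p)
    (hy : d y = 0) : d (x * y) = d x * y := by
  rw [hleib p x hx y, hy, mul_zero, smul_zero, add_zero]

theorem IsPDTypeDGA.exists_dual_injOn_top (hpd : IsPDTypeDGA gr n d) :
    ∃ ψ : Module.Dual ℂ V, ∀ u ∈ gr n, ψ u = 0 → u = 0 := by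
  obtain ⟨-, -, -, ⟨v, hv0, hvn⟩, -⟩ := hpd
  obtain ⟨ψ, hψ⟩ := Module.Projective.exists_dual_eq_one ℂ hv0
  refine ⟨ψ, fun u hu hψu => ?_⟩
  rw [hvn, Submodule.mem_span_singleton] at hu
  obtain ⟨c, rfl⟩ := hu
  simp_all

theorem IsPDTypeDGA.d_eq_zero_of_mem_top_sub_one (hpd : IsPDTypeDGA gr n d) :
    ∀ a ∈ gr ((n : ℤ) - 1), d a = 0 :=
  hpd.2.2.2.2.2.1

variable [GradedAlgebra gr]

theorem d_one_eq_zero (hleib : IsGradedDerivation gr d) : d 1 = 0 := by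
  simpa using hleib 0 1 (SetLike.one_mem_graded gr) 1

theorem eq_zero_of_mem_top_of_eq_d (hdeg : ∀ (i : ℤ), ∀ x ∈ gr i, d x ∈ gr (i + 1))
    (htop : ∀ a ∈ gr ((n : ℤ) - 1), d a = 0) {x y : V} (hx : x ∈ gr n) (hxy : x = d y) :
    x = 0 := by
  obtain ⟨w, hw, rfl⟩ := exists_mem_eq_map_of_mem_add hdeg (i := (n : ℤ) - 1)
    (by rwa [sub_add_cancel]) hxy
  exact htop w hw

theorem IsPDTypeDGA.eq_zero_of_forall_mul_eq_zero (hpd : IsPDTypeDGA gr n d) {i : ℤ} {a : V}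
    (ha : a ∈ gr i) (h : ∀ b ∈ gr (n - i), a * b = 0) : a = 0 := by
  obtain ⟨hneg, hbig, h0, ⟨v, hv0, hvn⟩, hnd, -, -⟩ := hpd
  rcases lt_trichotomy i 0 with hi | rfl | hi
  · simpa [hneg i hi] using ha
  · rw [h0, Submodule.mem_span_singleton] at ha
    obtain ⟨c, rfl⟩ := ha
    have hcv := h v (by simp [hvn])
    rw [smul_mul_assoc, one_mul, smul_eq_zero] at hcv
    simp [hcv.resolve_right hv0]
  rcases lt_trichotomy i n with hin | rfl | hin
  · exact hnd i hi hin a ha h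
  · simpa using h 1 (by simpa using SetLike.one_mem_graded gr)
  · simpa [hbig i hin] using ha

variable (gr n) in
noncomputable def topForm (ψ : Module.Dual ℂ V) : Module.Dual ℂ V :=
  ψ ∘ₗ GradedAlgebra.proj gr n

variable (gr n) in
noncomputable def topPairing (ψ : Module.Dual ℂ V) : LinearMap.BilinForm ℂ V :=
  (LinearMap.mul ℂ V).compr₂ (topForm gr n ψ)

variable {ψ : Module.Dual ℂ V}

theorem topForm_apply (x : V) : topForm gr n ψ x = ψ (decompose gr x n) := rfl

theorem topPairing_apply (x y : V) : topPairing gr n ψ x y = topForm gr n ψ (x * y) := rfl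

theorem topPairing_apply_of_mem_right {j : ℤ} (x : V) {y : V} (hy : y ∈ gr j) :
    topPairing gr n ψ x y = ψ (decompose gr x (n - j) * y) := by
  rw [topPairing_apply, topForm_apply, ← coe_decompose_mul_add_of_right_mem gr hy, sub_add_cancel]

theorem topPairing_isRefl : (topPairing gr n ψ).IsRefl := fun x y h => by
  rwa [topPairing_apply, mul_comm, ← topPairing_apply]

theorem topPairing_nondegenerate (hpd : IsPDTypeDGA gr n d)
    (hψ : ∀ u ∈ gr n, ψ u = 0 → u = 0) : (topPairing gr n ψ).Nondegenerate := by
  have hrefl : LinearMap.IsRefl (topPairing gr n ψ) := topPairing_isRefl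
  refine hrefl.nondegenerate_iff_separatingLeft.2 fun a ha => ?_
  apply (decompose gr).injective
  ext i : 2
  rw [decompose_zero, DirectSum.zero_apply, ZeroMemClass.coe_zero]
  refine hpd.eq_zero_of_forall_mul_eq_zero (decompose gr a i).2 fun b hb => hψ _ ?_ ?_
  · simpa using SetLike.mul_mem_graded (decompose gr a i).2 hb
  · have hab := ha b
    rwa [topPairing_apply_of_mem_right a hb, sub_sub_cancel] at hab

theorem topForm_d_eq_zero (hdeg : ∀ (i : ℤ), ∀ x ∈ gr i, d x ∈ gr (i + 1))
    (htop : ∀ a ∈ gr ((n : ℤ) - 1), d a = 0) (x : V) : topForm gr n ψ (d x) = 0 := by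
  rw [topForm_apply, ← sub_add_cancel (n : ℤ) 1, coe_decompose_map_add hdeg,
    htop _ (Subtype.prop _), map_zero]

theorem topPairing_d_left (hdeg : ∀ (i : ℤ), ∀ x ∈ gr i, d x ∈ gr (i + 1))
    (hleib : IsGradedDerivation gr d) (htop : ∀ a ∈ gr ((n : ℤ) - 1), d a = 0) {p : ℤ} {x : V}
    (hx : x ∈ gr p) (y : V) :
    topPairing gr n ψ (d x) y = -((-1 : ℂ) ^ p * topPairing gr n ψ x (d y)) := by
  have h := topForm_d_eq_zero (ψ := ψ) hdeg htop (x * y)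
  rw [hleib p x hx y, map_add, map_smul, smul_eq_mul] at h
  rw [topPairing_apply, topPairing_apply]
  linear_combination h

theorem orthogonal_range_d_le_ker (hpd : IsPDTypeDGA gr n d)
    (hψ : ∀ u ∈ gr n, ψ u = 0 → u = 0)
    (hdeg : ∀ (i : ℤ), ∀ x ∈ gr i, d x ∈ gr (i + 1))
    (hleib : IsGradedDerivation gr d) :
    (topPairing gr n ψ).orthogonal (LinearMap.range d) ≤ LinearMap.ker d := by
  intro m hm
  have hvanish : (topPairing gr n ψ).flip (d m) = 0 :=
    LinearMap.eq_zero_of_forall_mem (𝒜 := gr) fun p x hx => by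
      have h := topPairing_d_left (ψ := ψ) hdeg hleib hpd.d_eq_zero_of_mem_top_sub_one hx m
      rw [hm (d x) (LinearMap.mem_range_self d x), eq_comm, neg_eq_zero] at h
      exact (mul_eq_zero.1 h).resolve_left (zpow_ne_zero p (by norm_num))
  exact (topPairing_nondegenerate hpd hψ).2 _ fun x => LinearMap.congr_fun hvanish x

theorem IsPDTypeDGA.exists_eq_d_of_forall_mul_eq_zero [FiniteDimensional ℂ V]
    (hpd : IsPDTypeDGA gr n d) (hdeg : ∀ (i : ℤ), ∀ x ∈ gr i, d x ∈ gr (i + 1))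
    (hleib : IsGradedDerivation gr d) {i : ℤ} {x : V} (hx : x ∈ gr i)
    (h : ∀ z ∈ gr (n - i), d z = 0 → x * z = 0) :
    ∃ w ∈ gr (i - 1), x = d w := by
  obtain ⟨ψ, hψ⟩ := hpd.exists_dual_injOn_top
  have hB := topPairing_nondegenerate hpd hψ
  have hx_orth : x ∈ (topPairing gr n ψ).orthogonal (LinearMap.ker d) := fun z hz => by
    have hzc : d (decompose gr z (n - i)) = 0 := by
      rw [← coe_decompose_map_add hdeg, LinearMap.mem_ker.1 hz, decompose_zero,
        DirectSum.zero_apply, ZeroMemClass.coe_zero]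
    rw [topPairing_apply_of_mem_right z hx, mul_comm, h _ (Subtype.prop _) hzc, map_zero]
  have hrange : (topPairing gr n ψ).orthogonal (LinearMap.ker d) ≤ LinearMap.range d :=
    calc _ ≤ (topPairing gr n ψ).orthogonal
            ((topPairing gr n ψ).orthogonal (LinearMap.range d)) :=
          LinearMap.BilinForm.orthogonal_le (orthogonal_range_d_le_ker hpd hψ hdeg hleib)
      _ = LinearMap.range d := LinearMap.BilinForm.orthogonal_orthogonal hB topPairing_isRefl _
  obtain ⟨y, rfl⟩ := hrange hx_orth
  exact exists_mem_eq_map_of_mem_add hdeg (by rwa [sub_add_cancel]) rfl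

end PDType

section CohomologyPage

variable {V V' V'' : Type} [CommRing V] [Algebra ℂ V] [CommRing V'] [Algebra ℂ V']
  [CommRing V''] [Algebra ℂ V'']
  {gr : ℤ → Submodule ℂ V} {gr' : ℤ → Submodule ℂ V'} {gr'' : ℤ → Submodule ℂ V''}
  {n : ℕ} {d : V →ₗ[ℂ] V} {d' : V' →ₗ[ℂ] V'} {ρ : V →ₗ[ℂ] V'}
  {ρ' : V' →ₗ[ℂ] V''}

theorem le_map_of_forall_exists
    (hρsurj : ∀ (i : ℤ), ∀ y ∈ gr' i, ∃ x ∈ gr i, d x = 0 ∧ ρ x = y)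
    (i : ℤ) : gr' i ≤ (gr i).map ρ := fun y hy =>
  let ⟨x, hx, _, hxy⟩ := hρsurj i y hy
  ⟨x, hx, hxy⟩

theorem eq_span_of_forall_exists (hρgr : ∀ (i : ℤ), ∀ x ∈ gr i, d x = 0 → ρ x ∈ gr' i)
    (hρsurj : ∀ (i : ℤ), ∀ y ∈ gr' i, ∃ x ∈ gr i, d x = 0 ∧ ρ x = y)
    {i : ℤ} {u : V} (hu : gr i = Submodule.span ℂ {u}) (hdu : d u = 0) :
    gr' i = Submodule.span ℂ {ρ u} := by
  refine le_antisymm ?_ ((Submodule.span_singleton_le_iff_mem _ _).2 (hρgr i u (by simp [hu]) hdu))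
  simpa [hu, Submodule.map_span] using le_map_of_forall_exists hρsurj i

theorem IsPDTypeDGA.next_d_eq_zero_of_mem_top_sub_one (hpd : IsPDTypeDGA gr n d)
    (hρsurj : ∀ (i : ℤ), ∀ y ∈ gr' i, ∃ x ∈ gr i, d x = 0 ∧ ρ x = y)
    (hdeg' : ∀ (i : ℤ), ∀ x ∈ gr' i, d' x ∈ gr' (i + 1))
    (hρ'surj : ∀ (i : ℤ), ∀ y ∈ gr'' i, ∃ x ∈ gr' i, d' x = 0 ∧ ρ' x = y)
    (hρ'ker : ∀ x, d' x = 0 → (ρ' x = 0 ↔ ∃ y, x = d' y)) (hne : gr'' n ≠ ⊥) :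
    ∀ a ∈ gr' ((n : ℤ) - 1), d' a = 0 := by
  obtain ⟨-, -, -, ⟨v, -, hvn⟩, -⟩ := hpd
  have htop : gr' n ≤ Submodule.span ℂ {ρ v} := by
    simpa [hvn, Submodule.map_span] using le_map_of_forall_exists hρsurj n
  intro a ha
  by_contra hda
  refine hne ((Submodule.eq_bot_iff _).2 fun y hy => ?_)
  obtain ⟨x, hx, hdx, rfl⟩ := hρ'surj n y hy
  obtain ⟨c, hc⟩ := Submodule.mem_span_singleton.1 (htop (by simpa using hdeg' _ a ha))
  obtain ⟨e, he⟩ := Submodule.mem_span_singleton.1 (htop hx)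
  have hc0 : c ≠ 0 := by
    rintro rfl
    exact hda (by rw [← hc, zero_smul])
  refine (hρ'ker x hdx).2 ⟨(e / c) • a, ?_⟩
  rw [map_smul, ← hc, smul_smul, div_mul_cancel₀ _ hc0, he]

theorem IsPDTypeDGA.of_cohomology [GradedAlgebra gr] [GradedAlgebra gr'] [FiniteDimensional ℂ V]
    (hpd : IsPDTypeDGA gr n d) (hdeg : ∀ (i : ℤ), ∀ x ∈ gr i, d x ∈ gr (i + 1))
    (hleib : IsGradedDerivation gr d) (hleib' : IsGradedDerivation gr' d')
    (hρone : ρ 1 = 1) (hρmul : ∀ x y, d x = 0 → d y = 0 → ρ (x * y) = ρ x * ρ y)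
    (hρgr : ∀ (i : ℤ), ∀ x ∈ gr i, d x = 0 → ρ x ∈ gr' i)
    (hρsurj : ∀ (i : ℤ), ∀ y ∈ gr' i, ∃ x ∈ gr i, d x = 0 ∧ ρ x = y)
    (hρker : ∀ x, d x = 0 → (ρ x = 0 ↔ ∃ y, x = d y))
    (htop' : ∀ a ∈ gr' ((n : ℤ) - 1), d' a = 0) :
    IsPDTypeDGA gr' n d' := by
  obtain ⟨hneg, hbig, h0, ⟨v, hv0, hvn⟩, -, htop, hbot⟩ := id hpd
  have hbot' : ∀ i, gr i = ⊥ → gr' i = ⊥ := fun i hi =>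
    eq_bot_iff.2 (by simpa [hi] using le_map_of_forall_exists hρsurj i)
  have hv : v ∈ gr n := by simp [hvn]
  have hdv : d v = 0 := by simpa [hbig _ (lt_add_one _)] using hdeg n v hv
  have h0' : gr' 0 = Submodule.span ℂ {1} := by
    simpa [hρone] using
      eq_span_of_forall_exists hρgr hρsurj h0 (hbot 1 (SetLike.one_mem_graded gr))
  refine ⟨fun i hi => hbot' i (hneg i hi), fun i hi => hbot' i (hbig i hi), h0',
    ⟨ρ v, ?_, eq_span_of_forall_exists hρgr hρsurj hvn hdv⟩, ?_, htop', ?_⟩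
  · intro hρv
    obtain ⟨y, hy⟩ := (hρker v hdv).1 hρv
    exact hv0 (eq_zero_of_mem_top_of_eq_d hdeg htop hv hy)
  · intro i _ _ a ha hab
    obtain ⟨x, hx, hdx, rfl⟩ := hρsurj i a ha
    have hann : ∀ z ∈ gr (n - i), d z = 0 → x * z = 0 := fun z hz hdz => by
      have hxz : x * z ∈ gr n := by simpa using SetLike.mul_mem_graded hx hz
      have hdxz : d (x * z) = 0 := by rw [d_mul_of_d_eq_zero hleib hx hdz, hdx, zero_mul]
      obtain ⟨y, hy⟩ := (hρker _ hdxz).1 (by rw [hρmul x z hdx hdz, hab _ (hρgr _ z hz hdz)])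
      exact eq_zero_of_mem_top_of_eq_d hdeg htop hxz hy
    obtain ⟨w, -, hw⟩ := hpd.exists_eq_d_of_forall_mul_eq_zero hdeg hleib hx hann
    exact (hρker x hdx).2 ⟨w, hw⟩
  · intro a ha
    obtain ⟨c, rfl⟩ := Submodule.mem_span_singleton.1 (h0' ▸ ha)
    rw [map_smul, d_one_eq_zero hleib', smul_zero]

end CohomologyPage

theorem injective_of_cohomology {W V W' V' : Type}
    [CommRing W] [Algebra ℂ W] [FiniteDimensional ℂ W] [CommRing V] [Algebra ℂ V]
    [CommRing W'] [Algebra ℂ W'] [CommRing V'] [Algebra ℂ V']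
    {grW : ℤ → Submodule ℂ W} [GradedAlgebra grW]
    {grV : ℤ → Submodule ℂ V} [GradedAlgebra grV]
    {grW' : ℤ → Submodule ℂ W'} [GradedAlgebra grW'] {grV' : ℤ → Submodule ℂ V'}
    [GradedAlgebra grV'] {n : ℕ} {dW : W →ₗ[ℂ] W} {dV : V →ₗ[ℂ] V}
    {f : W →ₗ[ℂ] V} {f' : W' →ₗ[ℂ] V'} {ρW : W →ₗ[ℂ] W'} {ρV : V →ₗ[ℂ] V'}
    (hpdW : IsPDTypeDGA grW n dW) (hdegW : ∀ (i : ℤ), ∀ x ∈ grW i, dW x ∈ grW (i + 1))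
    (hleibW : IsGradedDerivation grW dW) (hdegV : ∀ (i : ℤ), ∀ x ∈ grV i, dV x ∈ grV (i + 1))
    (hleibV : IsGradedDerivation grV dV) (htopV : ∀ a ∈ grV ((n : ℤ) - 1), dV a = 0)
    (hfinj : Function.Injective f) (hfmul : ∀ x y, f (x * y) = f x * f y)
    (hfgr : ∀ (i : ℤ), ∀ x ∈ grW i, f x ∈ grV i) (hfd : ∀ x, f (dW x) = dV (f x))
    (hρWsurj : ∀ (i : ℤ), ∀ y ∈ grW' i, ∃ x ∈ grW i, dW x = 0 ∧ ρW x = y)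
    (hρWker : ∀ x, dW x = 0 → (ρW x = 0 ↔ ∃ y, x = dW y))
    (hρVker : ∀ x, dV x = 0 → (ρV x = 0 ↔ ∃ y, x = dV y))
    (hf'gr : ∀ (i : ℤ), ∀ x ∈ grW' i, f' x ∈ grV' i)
    (hfρ : ∀ x, dW x = 0 → f' (ρW x) = ρV (f x)) :
    Function.Injective f' := by
  refine injective_of_forall_mem_map_eq_zero hf'gr fun j u hu hfu => ?_
  obtain ⟨x, hx, hdx, rfl⟩ := hρWsurj j u hu
  have hdfx : dV (f x) = 0 := by rw [← hfd, hdx, map_zero]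
  obtain ⟨y, hy⟩ := (hρVker _ hdfx).1 (by rw [← hfρ x hdx, hfu])
  obtain ⟨w, hw, hfxw⟩ := exists_mem_eq_map_of_mem_add hdegV (i := j - 1)
    (by rw [sub_add_cancel]; exact hfgr j x hx) hy
  have hann : ∀ z ∈ grW (n - j), dW z = 0 → x * z = 0 := fun z hz hdz => hfinj <| by
    have hdfz : dV (f z) = 0 := by rw [← hfd, hdz, map_zero]
    have hwfz : w * f z ∈ grV (n - 1) := by
      simpa using SetLike.mul_mem_graded hw (hfgr _ z hz)
    rw [map_zero, hfmul, hfxw, ← d_mul_of_d_eq_zero hleibV hw hdfz, htopV _ hwfz]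
  obtain ⟨w', -, hw'⟩ := hpdW.exists_eq_d_of_forall_mul_eq_zero hdegW hleibW hx hann
  exact (hρWker x hdx).2 ⟨w', hw'⟩

theorem HarmonicCompatible.top_ne_bot {W V : Type} [CommRing W] [Algebra ℂ W]
    [CommRing V] [Algebra ℂ V] {grW : ℤ → Submodule ℂ W} {grV : ℤ → Submodule ℂ V} {n : ℕ}
    {dW : W →ₗ[ℂ] W} {dV : V →ₗ[ℂ] V} {f : W →ₗ[ℂ] V}
    (h : HarmonicCompatible grW grV n dW dV f) : grW n ≠ ⊥ ∧ grV n ≠ ⊥ := by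
  obtain ⟨hV, -, vV, hW, -, vW, -, hVsmul, -, -, -, hvV, hvV1, -, -, -, -,
    -, hWsmul, -, -, -, hvW, hvW1, -⟩ := h
  refine ⟨(Submodule.ne_bot_iff _).2 ⟨vW, hvW, fun h0 => ?_⟩,
    (Submodule.ne_bot_iff _).2 ⟨vV, hvV, fun h0 => ?_⟩⟩
  · have h := hWsmul 0 0 0
    rw [zero_smul, zero_mul, ← h0, hvW1] at h
    exact one_ne_zero h
  · have h := hVsmul 0 0 0
    rw [zero_smul, zero_mul, ← h0, hvV1] at h
    exact one_ne_zero h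

theorem pd_bba_spectral_sequence_pages_pd_and_injective_general
    (n : ℕ)
    (EA EB : ℕ → Type)
    [∀ r, CommRing (EA r)] [∀ r, Algebra ℂ (EA r)] [∀ r, FiniteDimensional ℂ (EA r)]
    [∀ r, CommRing (EB r)] [∀ r, Algebra ℂ (EB r)] [∀ r, FiniteDimensional ℂ (EB r)]
    (grA : ∀ r : ℕ, ℤ → Submodule ℂ (EA r)) [∀ r, GradedAlgebra (grA r)]
    (grB : ∀ r : ℕ, ℤ → Submodule ℂ (EB r)) [∀ r, GradedAlgebra (grB r)]
    -- each page carries a differential `d_r` of total degree `+1`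
    (dA : ∀ r : ℕ, EA r →ₗ[ℂ] EA r) (dB : ∀ r : ℕ, EB r →ₗ[ℂ] EB r)
    (hdAdeg : ∀ (r : ℕ) (i : ℤ), ∀ x ∈ grA r i, dA r x ∈ grA r (i + 1))
    (hdBdeg : ∀ (r : ℕ) (i : ℤ), ∀ x ∈ grB r i, dB r x ∈ grB r (i + 1))
    (hleibA : ∀ (r : ℕ) (p : ℤ), ∀ x ∈ grA r p, ∀ y,
      dA r (x * y) = dA r x * y + ((-1 : ℂ) ^ p) • (x * dA r y))
    (hleibB : ∀ (r : ℕ) (p : ℤ), ∀ x ∈ grB r p, ∀ y,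
      dB r (x * y) = dB r x * y + ((-1 : ℂ) ^ p) • (x * dB r y))
    -- page zero: the total complexes of `A` and of `B` are PD-type DGAs
    (hA0 : IsPDTypeDGA (grA 0) n (dA 0))
    (hB0 : IsPDTypeDGA (grB 0) n (dB 0))
    -- page passage: `E_{r+1}` is the cohomology of `(E_r, d_r)`
    (ρA : ∀ r : ℕ, EA r →ₗ[ℂ] EA (r + 1))
    (ρB : ∀ r : ℕ, EB r →ₗ[ℂ] EB (r + 1))
    (hρAone : ∀ r, ρA r 1 = 1) (hρBone : ∀ r, ρB r 1 = 1)
    (hρAmul : ∀ r x y, dA r x = 0 → dA r y = 0 → ρA r (x * y) = ρA r x * ρA r y)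
    (hρBmul : ∀ r x y, dB r x = 0 → dB r y = 0 → ρB r (x * y) = ρB r x * ρB r y)
    (hρAgr : ∀ (r : ℕ) (i : ℤ), ∀ x ∈ grA r i, dA r x = 0 → ρA r x ∈ grA (r + 1) i)
    (hρBgr : ∀ (r : ℕ) (i : ℤ), ∀ x ∈ grB r i, dB r x = 0 → ρB r x ∈ grB (r + 1) i)
    (hρAsurj : ∀ (r : ℕ) (i : ℤ), ∀ y ∈ grA (r + 1) i,
      ∃ x ∈ grA r i, dA r x = 0 ∧ ρA r x = y)
    (hρBsurj : ∀ (r : ℕ) (i : ℤ), ∀ y ∈ grB (r + 1) i,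
      ∃ x ∈ grB r i, dB r x = 0 ∧ ρB r x = y)
    (hρAker : ∀ r x, dA r x = 0 → (ρA r x = 0 ↔ ∃ y, x = dA r y))
    (hρBker : ∀ r x, dB r x = 0 → (ρB r x = 0 ↔ ∃ y, x = dB r y))
    -- the morphism of spectral sequences induced by the inclusion `B ⊆ A`
    (f : ∀ r : ℕ, EB r →ₗ[ℂ] EA r)
    (hfmul : ∀ r x y, f r (x * y) = f r x * f r y)
    (hfgr : ∀ (r : ℕ) (i : ℤ), ∀ x ∈ grB r i, f r x ∈ grA r i)
    (hfd : ∀ r x, f r (dB r x) = dA r (f r x))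
    (hf0 : Function.Injective (f 0))
    (hfρ : ∀ r x, dB r x = 0 → f (r + 1) (ρB r x) = ρA r (f r x))
    -- harmonic compatibility at every stage
    (hharm : ∀ r : ℕ, HarmonicCompatible (grB r) (grA r) n (dB r) (dA r) (f r)) :
    ∀ r : ℕ,
      IsPDTypeDGA (grA r) n (dA r) ∧
      IsPDTypeDGA (grB r) n (dB r) ∧
      Function.Injective (f r) := by
  intro r
  induction r with
  | zero => exact ⟨hA0, hB0, hf0⟩
  | succ r ih =>
    obtain ⟨hpdA, hpdB, hinj⟩ := ih
    obtain ⟨hneB, hneA⟩ := (hharm (r + 1 + 1)).top_ne_bot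
    have htopA := hpdA.next_d_eq_zero_of_mem_top_sub_one (hρAsurj r) (hdAdeg (r + 1))
      (hρAsurj (r + 1)) (hρAker (r + 1)) hneA
    have htopB := hpdB.next_d_eq_zero_of_mem_top_sub_one (hρBsurj r) (hdBdeg (r + 1))
      (hρBsurj (r + 1)) (hρBker (r + 1)) hneB
    refine ⟨?_, ?_, ?_⟩
    · exact hpdA.of_cohomology (hdAdeg r) (hleibA r) (hleibA (r + 1)) (hρAone r) (hρAmul r)
        (hρAgr r) (hρAsurj r) (hρAker r) htopA
    · exact hpdB.of_cohomology (hdBdeg r) (hleibB r) (hleibB (r + 1)) (hρBone r) (hρBmul r)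
        (hρBgr r) (hρBsurj r) (hρBker r) htopB
    · exact injective_of_cohomology hpdB (hdBdeg r) (hleibB r) (hdAdeg r) (hleibA r)
        hpdA.d_eq_zero_of_mem_top_sub_one hinj (hfmul r) (hfgr r) (hfd r) (hρBsurj r)
        (hρBker r) (hρAker r) (hfgr (r + 1)) (hfρ r)

/-- Let `(A^{*,*}, ∂, ∂̄)` be a finite-dimensional bidifferential
bigraded algebra whose total complex is a finite-dimensional DGA of PD-type, and
`B ⊆ A` a sub-BBA with the same property, with harmonic theories compatible at
every stage.  The pages of the associated spectral sequences (filtering by the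
first degree), presented here through their defining interface — `E₀(A) = Tot A`,
`E₀(B) = Tot B`, each page a finite-dimensional graded commutative `ℂ`-algebra
with differential `d_r` (a derivation of degree `+1`), the page maps
`ρ_r : E_r → E_{r+1}` realizing each next page as the cohomology of the previous
one, and the morphisms `f_r : E_r(B) → E_r(A)` induced by the inclusion
`B ⊆ A` — satisfy: for every `r`, `Tot E_r(A)` and `Tot E_r(B)` are
finite-dimensional DGAs of PD-type, and `f_r : E_r(B) → E_r(A)` is injective. -/
theorem pd_bba_spectral_sequence_pages_pd_and_injective
    (n : ℕ) (hn : 1 ≤ n)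
    (EA EB : ℕ → Type)
    [∀ r, CommRing (EA r)] [∀ r, Algebra ℂ (EA r)] [∀ r, FiniteDimensional ℂ (EA r)]
    [∀ r, CommRing (EB r)] [∀ r, Algebra ℂ (EB r)] [∀ r, FiniteDimensional ℂ (EB r)]
    (grA : ∀ r : ℕ, ℤ → Submodule ℂ (EA r)) [∀ r, GradedAlgebra (grA r)]
    (grB : ∀ r : ℕ, ℤ → Submodule ℂ (EB r)) [∀ r, GradedAlgebra (grB r)]
    (gradedCommA : ∀ (r : ℕ) (p q : ℤ), ∀ a ∈ grA r p, ∀ b ∈ grA r q,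
      a * b = ((-1 : ℂ) ^ (p * q)) • (b * a))
    (gradedCommB : ∀ (r : ℕ) (p q : ℤ), ∀ a ∈ grB r p, ∀ b ∈ grB r q,
      a * b = ((-1 : ℂ) ^ (p * q)) • (b * a))
    -- each page carries a differential `d_r` of total degree `+1`
    (dA : ∀ r : ℕ, EA r →ₗ[ℂ] EA r) (dB : ∀ r : ℕ, EB r →ₗ[ℂ] EB r)
    (hdAdeg : ∀ (r : ℕ) (i : ℤ), ∀ x ∈ grA r i, dA r x ∈ grA r (i + 1))
    (hdBdeg : ∀ (r : ℕ) (i : ℤ), ∀ x ∈ grB r i, dB r x ∈ grB r (i + 1))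
    (hdAsq : ∀ r x, dA r (dA r x) = 0) (hdBsq : ∀ r x, dB r (dB r x) = 0)
    (hleibA : ∀ (r : ℕ) (p : ℤ), ∀ x ∈ grA r p, ∀ y,
      dA r (x * y) = dA r x * y + ((-1 : ℂ) ^ p) • (x * dA r y))
    (hleibB : ∀ (r : ℕ) (p : ℤ), ∀ x ∈ grB r p, ∀ y,
      dB r (x * y) = dB r x * y + ((-1 : ℂ) ^ p) • (x * dB r y))
    -- page zero: the total complexes of `A` and of `B` are PD-type DGAs
    (hA0 : IsPDTypeDGA (grA 0) n (dA 0))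
    (hB0 : IsPDTypeDGA (grB 0) n (dB 0))
    -- page passage: `E_{r+1}` is the cohomology of `(E_r, d_r)`
    (ρA : ∀ r : ℕ, EA r →ₗ[ℂ] EA (r + 1))
    (ρB : ∀ r : ℕ, EB r →ₗ[ℂ] EB (r + 1))
    (hρAone : ∀ r, ρA r 1 = 1) (hρBone : ∀ r, ρB r 1 = 1)
    (hρAmul : ∀ r x y, dA r x = 0 → dA r y = 0 → ρA r (x * y) = ρA r x * ρA r y)
    (hρBmul : ∀ r x y, dB r x = 0 → dB r y = 0 → ρB r (x * y) = ρB r x * ρB r y)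
    (hρAgr : ∀ (r : ℕ) (i : ℤ), ∀ x ∈ grA r i, dA r x = 0 → ρA r x ∈ grA (r + 1) i)
    (hρBgr : ∀ (r : ℕ) (i : ℤ), ∀ x ∈ grB r i, dB r x = 0 → ρB r x ∈ grB (r + 1) i)
    (hρAsurj : ∀ (r : ℕ) (i : ℤ), ∀ y ∈ grA (r + 1) i,
      ∃ x ∈ grA r i, dA r x = 0 ∧ ρA r x = y)
    (hρBsurj : ∀ (r : ℕ) (i : ℤ), ∀ y ∈ grB (r + 1) i,
      ∃ x ∈ grB r i, dB r x = 0 ∧ ρB r x = y)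
    (hρAker : ∀ r x, dA r x = 0 → (ρA r x = 0 ↔ ∃ y, x = dA r y))
    (hρBker : ∀ r x, dB r x = 0 → (ρB r x = 0 ↔ ∃ y, x = dB r y))
    -- the morphism of spectral sequences induced by the inclusion `B ⊆ A`
    (f : ∀ r : ℕ, EB r →ₗ[ℂ] EA r)
    (hfone : ∀ r, f r 1 = 1)
    (hfmul : ∀ r x y, f r (x * y) = f r x * f r y)
    (hfgr : ∀ (r : ℕ) (i : ℤ), ∀ x ∈ grB r i, f r x ∈ grA r i)
    (hfd : ∀ r x, f r (dB r x) = dA r (f r x))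
    (hf0 : Function.Injective (f 0))
    (hfρ : ∀ r x, dB r x = 0 → f (r + 1) (ρB r x) = ρA r (f r x))
    -- harmonic compatibility at every stage
    (hharm : ∀ r : ℕ, HarmonicCompatible (grB r) (grA r) n (dB r) (dA r) (f r)) :
    ∀ r : ℕ,
      IsPDTypeDGA (grA r) n (dA r) ∧
      IsPDTypeDGA (grB r) n (dB r) ∧
      Function.Injective (f r) :=
  pd_bba_spectral_sequence_pages_pd_and_injective_general n EA EB grA grB dA dB hdAdeg hdBdeg hleibA
    hleibB hA0 hB0 ρA ρB hρAone hρBone hρAmul hρBmul hρAgr hρBgr hρAsurj hρBsurj hρAker hρBker f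
    hfmul hfgr hfd hf0 hfρ hharm
end
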